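/- arXiv:2510.13275 — 5 statements merged into one kernel-verified Lean document; each statement's English description precedes it below -/
import Mathlib

section
/- Let g : ℝ → ℝ be a nonnegative function. Then for every t > 0 and every λ ∈ (0,1) there exists r with 0 < r ≤ t such that g(r/λ) ≤ (2/λ)·(r + g(r)). -/
theorem stmt0 (g : ℝ → ℝ) (hg : ∀ x, 0 ≤ g x) :
    ∀ t > (0:ℝ), ∀ lam ∈ Set.Ioo (0:ℝ) 1,
      ∃ r : ℝ, 0 < r ∧ r ≤ t ∧ g (r / lam) ≤ (2 / lam) * (r + g r) := by
  intro t ht lam hlam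
  obtain ⟨hl0, hl1⟩ := hlam
  by_contra hcon
  push_neg at hcon
  have key : ∀ n : ℕ, ∀ k : ℕ, ((2:ℝ)^n - 1) * (lam^k * t) ≤ g (lam^k * t) := by
    intro n
    induction n with
    | zero => intro k; simpa using hg (lam^k * t)
    | succ n ih =>
      intro k
      set s := lam^k * t with hs
      have hspos : 0 < s := by positivity
      have hrk : 0 < lam * s := by positivity
      have hle : lam * s ≤ t := by
        have h1 : lam^(k+1) ≤ 1 := pow_le_one₀ hl0.le hl1.le
        have : lam * s = lam^(k+1) * t := by rw [hs, pow_succ]; ring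
        nlinarith
      have h1 := hcon (lam * s) hrk hle
      have hdiv : lam * s / lam = s := by field_simp
      rw [hdiv] at h1
      have h2 : ((2:ℝ)^n - 1) * (lam * s) ≤ g (lam * s) := by
        have := ih (k+1)
        have e : lam^(k+1) * t = lam * s := by rw [hs, pow_succ]; ring
        rwa [e] at this
      have h1' : 2 * (lam * s + g (lam * s)) < lam * g s := by
        have := mul_lt_mul_of_pos_left h1 hl0
        have e : lam * (2 / lam * (lam * s + g (lam * s))) =
            2 * (lam * s + g (lam * s)) := by field_simp
        linarith [e ▸ this]
      have h3 : lam * (2^(n+1) * s) < lam * g s := by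
        nlinarith [pow_succ (2:ℝ) n]
      have h4 : (2:ℝ)^(n+1) * s < g s := (mul_lt_mul_iff_right₀ hl0).mp h3
      nlinarith
  obtain ⟨n, hn⟩ := pow_unbounded_of_one_lt (g t / t + 1) (by norm_num : (1:ℝ) < 2)
  have hk := key n 0
  simp at hk
  have h5 : g t / t < 2^n - 1 := by linarith
  have h6 : g t < (2^n - 1) * t := (div_lt_iff₀ ht).mp h5
  linarith
end

section
/- Assume γ(0) = 0. Then there exists ρ₀ > 0 such that for every ρ ∈ (0, ρ₀), H¹(Γ ∩ B_ρ(0)) ≤ ρ + ρ² · sup_{t ∈ [0,L]} ‖γ''(t)‖. -/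
open MeasureTheory Set

/-!
Since `γ` has unit speed it is `1`-Lipschitz, so `H¹ (γ '' A) ≤ |A|` and it suffices to show that
`γ t ∈ B_ρ(0)` forces `t ≤ ρ + ρ² M`, where `M = sup ‖γ''‖`. Taylor's formula with `‖γ' 0‖ = 1`
gives `‖γ t‖ ≥ t - (M / 2) t²`, which inverts to that bound as long as `M t ≤ 1 / 3`. The
remaining times are harmless: by injectivity and compactness `‖γ‖` is bounded below by some
`m > 0` on `[δ, L]`, and we take `ρ₀ = m`.
-/

theorem le_add_sq_mul_of_sub_half_mul_sq_le {M ρ t : ℝ} (hM : 0 ≤ M) (ht : 0 ≤ t)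
    (hMt : M * t ≤ 1 / 3) (hρ : t - M / 2 * t ^ 2 ≤ ρ) : t ≤ ρ + ρ ^ 2 * M := by
  by_contra! hlt
  have hρ0 : 0 ≤ ρ := by nlinarith
  -- `u ↦ u - M / 2 * u ^ 2` is increasing on `[0, 1 / M]` and maps `ρ + ρ ^ 2 * M` above `ρ`
  have hmono : (ρ + ρ ^ 2 * M) - M / 2 * (ρ + ρ ^ 2 * M) ^ 2 < t - M / 2 * t ^ 2 := by
    nlinarith [mul_pos (sub_pos.2 hlt)
      (show 0 < 2 - M * (t + (ρ + ρ ^ 2 * M)) by nlinarith [mul_nonneg hM hρ0])]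
  nlinarith [mul_nonneg (mul_nonneg hM (sq_nonneg ρ))
    (show 0 ≤ 1 - 2 * (M * ρ) - (M * ρ) ^ 2 by nlinarith [mul_nonneg hM hρ0])]

theorem norm_le_iSup_norm_of_continuousOn {α E : Type*} [TopologicalSpace α]
    [SeminormedAddCommGroup E] {f : α → E} {s : Set α} (hs : IsCompact s)
    (hf : ContinuousOn f s) {x : α} (hx : x ∈ s) : ‖f x‖ ≤ ⨆ y : s, ‖f y‖ :=
  le_ciSup (image_eq_range (fun y => ‖f y‖) s ▸ hs.bddAbove_image hf.norm) ⟨x, hx⟩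

theorem LipschitzOnWith.hausdorffMeasure_one_image_le_volume {X : Type*} [EMetricSpace X]
    [MeasurableSpace X] [BorelSpace X] {f : ℝ → X} {s : Set ℝ} (hf : LipschitzOnWith 1 f s) :
    μH[1] (f '' s) ≤ volume s := by
  simpa [hausdorffMeasure_real] using hf.hausdorffMeasure_image_le zero_le_one

theorem exists_pos_le_dist_of_injOn {X : Type*} [MetricSpace X] {γ : ℝ → X} {a b δ : ℝ}
    (hγ : ContinuousOn γ (Icc a b)) (hinj : InjOn γ (Icc a b)) (hδ : a < δ) :
    ∃ m > 0, ∀ t ∈ Icc δ b, m ≤ dist (γ t) (γ a) := by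
  have hsub : Icc δ b ⊆ Icc a b := Icc_subset_Icc_left hδ.le
  refine isCompact_Icc.exists_forall_le'
    (continuous_dist.comp_continuousOn ((hγ.mono hsub).prodMk continuousOn_const))
    fun t ht => dist_pos.2 fun h => (hδ.trans_le ht.1).ne' ?_
  exact hinj (hsub ht) ⟨le_rfl, hδ.le.trans (ht.1.trans ht.2)⟩ h

section

variable {E : Type*} [NormedAddCommGroup E] [NormedSpace ℝ E]

theorem norm_sub_sub_smul_le_of_norm_deriv_deriv_le {f f' f'' : ℝ → E} {a b M x : ℝ}
    (hf : ∀ y ∈ Icc a b, HasDerivWithinAt f (f' y) (Icc a b) y)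
    (hf' : ∀ y ∈ Icc a b, HasDerivWithinAt f' (f'' y) (Icc a b) y)
    (hM : ∀ y ∈ Icc a b, ‖f'' y‖ ≤ M) (hx : x ∈ Icc a b) :
    ‖f x - f a - (x - a) • f' a‖ ≤ M / 2 * (x - a) ^ 2 := by
  have hg : ∀ y ∈ Icc a b, HasDerivWithinAt (fun y => f y - f a - (y - a) • f' a)
      (f' y - f' a) (Icc a b) y := fun y hy => by
    have := ((hf y hy).sub_const (f a)).sub
      (((hasDerivWithinAt_id y _).sub_const a).smul_const (f' a))
    rwa [one_smul] at this
  have hf'_sub : ∀ y ∈ Icc a b, ‖f' y - f' a‖ ≤ M * (y - a) :=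
    norm_image_sub_le_of_norm_deriv_le_segment' hf' fun y hy => hM y (Ico_subset_Icc_self hy)
  refine image_norm_le_of_norm_deriv_right_le_deriv_boundary (B := fun y => M / 2 * (y - a) ^ 2)
    (B' := fun y => M * (y - a))
    (fun y hy => (hg y hy).continuousWithinAt)
    (fun y hy => (hg y (Ico_subset_Icc_self hy)).mono_of_mem_nhdsWithin
      (Icc_mem_nhdsGE_of_mem hy)) (by simp) (fun y => ?_)
    (fun y hy => hf'_sub y (Ico_subset_Icc_self hy)) hx
  exact ((((hasDerivAt_id y).sub_const a).pow 2).const_mul (M / 2)).congr_deriv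
    (by simp only [id, Nat.cast_ofNat, mul_one]; ring)

theorem sub_sub_half_mul_sq_le_norm_sub {γ : ℝ → E} {a b M t : ℝ} (hab : a < b)
    (hγ : ContDiffOn ℝ 2 γ (Icc a b)) (harc : ‖derivWithin γ (Icc a b) a‖ = 1)
    (hM : ∀ y ∈ Icc a b, ‖derivWithin (derivWithin γ (Icc a b)) (Icc a b) y‖ ≤ M)
    (ht : t ∈ Icc a b) : (t - a) - M / 2 * (t - a) ^ 2 ≤ ‖γ t - γ a‖ := by
  have hud : UniqueDiffOn ℝ (Icc a b) := uniqueDiffOn_Icc hab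
  have hγ' : ContDiffOn ℝ 1 (derivWithin γ (Icc a b)) (Icc a b) := hγ.derivWithin hud (by norm_num)
  have htaylor := norm_sub_sub_smul_le_of_norm_deriv_deriv_le
    (fun y hy => ((hγ.differentiableOn (by norm_num)) y hy).hasDerivWithinAt)
    (fun y hy => ((hγ'.differentiableOn one_ne_zero) y hy).hasDerivWithinAt) hM ht
  have htri := norm_sub_le (γ t - γ a) (γ t - γ a - (t - a) • derivWithin γ (Icc a b) a)
  rw [sub_sub_cancel, norm_smul, harc, Real.norm_of_nonneg (sub_nonneg.2 ht.1)] at htri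
  linarith

theorem exists_pos_forall_sub_le_of_norm_sub_lt {γ : ℝ → E} {a b M : ℝ} (hab : a < b)
    (hγ : ContDiffOn ℝ 2 γ (Icc a b)) (hinj : InjOn γ (Icc a b))
    (harc : ‖derivWithin γ (Icc a b) a‖ = 1)
    (hM : ∀ y ∈ Icc a b, ‖derivWithin (derivWithin γ (Icc a b)) (Icc a b) y‖ ≤ M) :
    ∃ ρ₀ > 0, ∀ ρ < ρ₀, ∀ t ∈ Icc a b, ‖γ t - γ a‖ < ρ → t - a ≤ ρ + ρ ^ 2 * M := by
  have hM0 : 0 ≤ M := (norm_nonneg _).trans (hM a ⟨le_rfl, hab.le⟩)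
  obtain ⟨δ, hδ0, hMδ⟩ : ∃ δ > 0, M * δ ≤ 1 / 3 :=
    ⟨1 / (3 * M + 1), by positivity, by rw [mul_one_div, div_le_iff₀ (by positivity)]; linarith⟩
  obtain ⟨m, hm0, hm⟩ :=
    exists_pos_le_dist_of_injOn hγ.continuousOn hinj (lt_add_of_pos_right a hδ0)
  refine ⟨m, hm0, fun ρ hρ t ht hγt => ?_⟩
  have htδ : t - a ≤ δ := by
    by_contra! h
    linarith [hm t ⟨by linarith, ht.2⟩, dist_eq_norm (γ t) (γ a)]
  exact le_add_sq_mul_of_sub_half_mul_sq_le hM0 (sub_nonneg.2 ht.1)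
    ((mul_le_mul_of_nonneg_left htδ hM0).trans hMδ)
    ((sub_sub_half_mul_sq_le_norm_sub hab hγ harc hM ht).trans hγt.le)

end

/-- Lemma 2.6 (single-curve case, Eq. (2.4)): if `γ : [0,L] → ℝ²` is an injective
`C²` curve parametrized by arclength with `γ(0) = 0` and image `Γ`, then there exists
`ρ₀ > 0` such that `H¹(Γ ∩ B_ρ(0)) ≤ ρ + ρ² sup_{[0,L]} ‖γ''‖` for every `ρ ∈ (0, ρ₀)`. -/
theorem stmt6 (L : ℝ) (hL : 0 < L) (γ : ℝ → EuclideanSpace ℝ (Fin 2))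
    (hsmooth : ContDiffOn ℝ 2 γ (Set.Icc 0 L))
    (hinj : Set.InjOn γ (Set.Icc 0 L))
    (harc : ∀ t ∈ Set.Icc (0:ℝ) L, ‖derivWithin γ (Set.Icc 0 L) t‖ = 1)
    (h0 : γ 0 = 0) :
    ∃ ρ₀ > (0:ℝ), ∀ ρ ∈ Set.Ioo (0:ℝ) ρ₀,
      μH[1] (γ '' Set.Icc 0 L ∩ Metric.ball (0 : EuclideanSpace ℝ (Fin 2)) ρ)
        ≤ ENNReal.ofReal (ρ + ρ ^ 2 *
            ⨆ t : Set.Icc (0:ℝ) L,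
              ‖derivWithin (derivWithin γ (Set.Icc 0 L)) (Set.Icc 0 L) (t : ℝ)‖) := by
  set M := ⨆ t : Icc (0:ℝ) L, ‖derivWithin (derivWithin γ (Icc 0 L)) (Icc 0 L) t‖
  have hud : UniqueDiffOn ℝ (Icc 0 L) := uniqueDiffOn_Icc hL
  have hM : ∀ t ∈ Icc 0 L, ‖derivWithin (derivWithin γ (Icc 0 L)) (Icc 0 L) t‖ ≤ M :=
    fun t => norm_le_iSup_norm_of_continuousOn isCompact_Icc
      ((hsmooth.derivWithin hud (m := 1) (by norm_num)).continuousOn_derivWithin hud le_rfl)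
  obtain ⟨ρ₀, hρ₀, hsub_le⟩ := exists_pos_forall_sub_le_of_norm_sub_lt hL hsmooth hinj
    (harc 0 ⟨le_rfl, hL.le⟩) hM
  have hlip : LipschitzOnWith 1 γ (Icc 0 L) :=
    (convex_Icc 0 L).lipschitzOnWith_of_nnnorm_derivWithin_le
      (hsmooth.differentiableOn (by norm_num)) fun t ht => by
        simp [← NNReal.coe_le_coe, harc t ht]
  refine ⟨ρ₀, hρ₀, fun ρ hρ => ?_⟩
  have hsub : γ '' Icc 0 L ∩ Metric.ball 0 ρ ⊆ γ '' (Icc 0 L ∩ Icc 0 (ρ + ρ ^ 2 * M)) := by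
    rintro _ ⟨⟨t, ht, rfl⟩, hγt⟩
    refine ⟨t, ⟨ht, ht.1, ?_⟩, rfl⟩
    simpa [h0] using hsub_le ρ hρ.2 t ht (by simpa [h0] using hγt)
  calc μH[1] (γ '' Icc 0 L ∩ Metric.ball 0 ρ)
      ≤ μH[1] (γ '' (Icc 0 L ∩ Icc 0 (ρ + ρ ^ 2 * M))) := measure_mono hsub
    _ ≤ volume (Icc 0 L ∩ Icc 0 (ρ + ρ ^ 2 * M)) :=
      (hlip.mono inter_subset_left).hausdorffMeasure_one_image_le_volume
    _ ≤ volume (Icc 0 (ρ + ρ ^ 2 * M)) := measure_mono inter_subset_right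
    _ = ENNReal.ofReal (ρ + ρ ^ 2 * M) := by simp [Real.volume_Icc]
end

section
/- There exists ρ₀ > 0 such that for every ρ ∈ (0, ρ₀), H¹( (⋃_{i=1}^N Γ_i) ∩ B_ρ(x₀) ) ≤ N ρ + N ρ² · max_{1 ≤ i ≤ N} sup_{t ∈ [0,L_i]} ‖γ_i''(t)‖. -/
open MeasureTheory Filter Set Topology

/-!
Near `x₀` each curve is a graph over its tangent line up to an error of order `ρ²`: by Taylor's
formula `‖γ t - γ 0‖ ≥ t - C t² / 2`, where `C` bounds `‖γ''‖`. So for small `ρ` the part of a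
curve inside `B_ρ(x₀)` is contained in `γ([0, ρ + C ρ²])` (injectivity keeps the rest of the curve
at positive distance from `x₀`), whose length, hence `H¹`-measure, is at most `ρ + C ρ²`.
Subadditivity over the `N` curves gives the bound.
-/

lemma le_add_mul_sq_of_sub_mul_sq_div_two_lt {C ρ t : ℝ} (hC : 0 ≤ C) (hρ : 0 ≤ ρ)
    (hCρ : C * ρ ≤ 2 / 5) (hCt : C * t ≤ 1) (h : t - C * t ^ 2 / 2 < ρ) :
    t ≤ ρ + C * ρ ^ 2 := by
  by_contra! hlt
  set s := ρ + C * ρ ^ 2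
  -- `u ↦ u - C u² / 2` is increasing on `[0, 1 / C]`, and its value at `s` is `≥ ρ` because
  -- `C ρ ≤ 2 / 5` gives `(1 + C ρ)² ≤ 2`.
  have hmono : s - C * s ^ 2 / 2 ≤ t - C * t ^ 2 / 2 := by
    have hCs : C * s ≤ 1 := by nlinarith
    nlinarith [mul_nonneg (sub_nonneg.2 hlt.le) (by linarith : 0 ≤ 2 - C * t - C * s)]
  have hs : ρ ≤ s - C * s ^ 2 / 2 := by
    have : C * ρ ^ 2 * (2 - (1 + C * ρ) ^ 2) ≥ 0 :=
      mul_nonneg (by positivity) (by nlinarith [mul_nonneg hC hρ])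
    nlinarith
  linarith

section Curves

variable {E : Type*} [NormedAddCommGroup E] [NormedSpace ℝ E] {γ : ℝ → E} {L C : ℝ}

lemma norm_sub_sub_smul_derivWithin_le (hL : 0 < L) (hγ : ContDiffOn ℝ 2 γ (Icc 0 L))
    (hC : ∀ t ∈ Icc 0 L, ‖derivWithin (derivWithin γ (Icc 0 L)) (Icc 0 L) t‖ ≤ C)
    {t : ℝ} (ht : t ∈ Icc 0 L) :
    ‖γ t - γ 0 - t • derivWithin γ (Icc 0 L) 0‖ ≤ C * t ^ 2 / 2 := by
  set γ' := derivWithin γ (Icc 0 L)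
  have hγ' : ∀ s ∈ Icc 0 L, HasDerivWithinAt γ (γ' s) (Icc 0 L) s := fun s hs =>
    (hγ.differentiableOn (by norm_num) s hs).hasDerivWithinAt
  have hγ'' : ∀ s ∈ Icc 0 L, HasDerivWithinAt γ' (derivWithin γ' (Icc 0 L) s) (Icc 0 L) s :=
    fun s hs => ((hγ.derivWithin (uniqueDiffOn_Icc hL) (by norm_num)).differentiableOn
      one_ne_zero s hs).hasDerivWithinAt
  have hγ'_sub : ∀ s ∈ Icc 0 L, ‖γ' s - γ' 0‖ ≤ C * (s - 0) :=
    norm_image_sub_le_of_norm_deriv_le_segment' hγ'' fun s hs => hC s (Ico_subset_Icc_self hs)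
  have hrem : ∀ s ∈ Ico 0 L,
      HasDerivWithinAt (fun u => γ u - γ 0 - u • γ' 0) (γ' s - γ' 0) (Ici s) s := by
    intro s hs
    have := (((hγ' s (Ico_subset_Icc_self hs)).mono_of_mem_nhdsWithin
      (Icc_mem_nhdsGE_of_mem hs)).sub_const (γ 0)).fun_sub
      ((hasDerivAt_id' s).smul_const (γ' 0)).hasDerivWithinAt
    simpa only [one_smul] using this
  have hbound : ∀ s, HasDerivAt (fun u => C * u ^ 2 / 2) (C * s) s := fun s =>
    (((hasDerivAt_pow 2 s).const_mul C).div_const 2).congr_deriv (by ring)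
  refine image_norm_le_of_norm_deriv_right_le_deriv_boundary ?_ hrem (by simp) hbound
    (fun s hs => by simpa using hγ'_sub s (Ico_subset_Icc_self hs)) ht
  exact (hγ.continuousOn.sub continuousOn_const).sub (continuousOn_id.smul continuousOn_const)

lemma sub_mul_sq_div_two_le_norm_sub (hL : 0 < L) (hγ : ContDiffOn ℝ 2 γ (Icc 0 L))
    (hunit : ‖derivWithin γ (Icc 0 L) 0‖ = 1)
    (hC : ∀ t ∈ Icc 0 L, ‖derivWithin (derivWithin γ (Icc 0 L)) (Icc 0 L) t‖ ≤ C)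
    {t : ℝ} (ht : t ∈ Icc 0 L) :
    t - C * t ^ 2 / 2 ≤ ‖γ t - γ 0‖ := by
  have htangent : ‖t • derivWithin γ (Icc 0 L) 0‖ = t := by
    rw [norm_smul, hunit, mul_one, Real.norm_of_nonneg ht.1]
  have := norm_sub_norm_le (t • derivWithin γ (Icc 0 L) 0) (γ t - γ 0)
  rw [htangent, norm_sub_rev (t • _)] at this
  linarith [norm_sub_sub_smul_derivWithin_le hL hγ hC ht]

lemma lipschitzOnWith_one_of_norm_derivWithin_le_one {s : Set ℝ} (hs : Convex ℝ s)
    (hγ : DifferentiableOn ℝ γ s) (hunit : ∀ t ∈ s, ‖derivWithin γ s t‖ ≤ 1) :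
    LipschitzOnWith 1 γ s :=
  hs.lipschitzOnWith_of_nnnorm_derivWithin_le hγ fun t ht => by
    simpa [← NNReal.coe_le_coe] using hunit t ht

end Curves

lemma hausdorffMeasure_image_Icc_le {X : Type*} [EMetricSpace X] [MeasurableSpace X]
    [BorelSpace X] {γ : ℝ → X} {a b : ℝ} (hγ : LipschitzOnWith 1 γ (Icc a b)) :
    μH[1] (γ '' Icc a b) ≤ ENNReal.ofReal (b - a) := by
  simpa [hausdorffMeasure_real] using hγ.hausdorffMeasure_image_le zero_le_one

lemma exists_pos_forall_dist_lt_imp_lt {X : Type*} [MetricSpace X] {γ : ℝ → X} {L δ : ℝ}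
    (hγ : ContinuousOn γ (Icc 0 L)) (hinj : InjOn γ (Icc 0 L)) (hδ : 0 < δ) :
    ∃ d > 0, ∀ t ∈ Icc 0 L, dist (γ t) (γ 0) < d → t < δ := by
  have hfar : γ 0 ∉ γ '' Icc δ L := by
    rintro ⟨t, ht, heq⟩
    have := hinj ⟨hδ.le.trans ht.1, ht.2⟩ ⟨le_rfl, hδ.le.trans (ht.1.trans ht.2)⟩ heq
    linarith [ht.1]
  have hclosed : IsClosed (γ '' Icc δ L) :=
    (isCompact_Icc.image_of_continuousOn
      (hγ.mono (Icc_subset_Icc hδ.le le_rfl))).isClosed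
  obtain ⟨d, hd, hball⟩ := Metric.mem_nhds_iff.1 (hclosed.isOpen_compl.mem_nhds hfar)
  refine ⟨d, hd, fun t ht hdist => ?_⟩
  by_contra! hδt
  exact hball (Metric.mem_ball.2 hdist) ⟨t, ⟨hδt, ht.2⟩, rfl⟩

lemma eventually_hausdorffMeasure_image_inter_ball_le {E : Type*} [NormedAddCommGroup E]
    [NormedSpace ℝ E] [MeasurableSpace E] [BorelSpace E] {γ : ℝ → E} {L C : ℝ} (hL : 0 < L)
    (hγ : ContDiffOn ℝ 2 γ (Icc 0 L)) (hinj : InjOn γ (Icc 0 L))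
    (hunit : ∀ t ∈ Icc 0 L, ‖derivWithin γ (Icc 0 L) t‖ = 1)
    (hC : ∀ t ∈ Icc 0 L, ‖derivWithin (derivWithin γ (Icc 0 L)) (Icc 0 L) t‖ ≤ C) :
    ∀ᶠ ρ in 𝓝[>] 0,
      μH[1] (γ '' Icc 0 L ∩ Metric.ball (γ 0) ρ) ≤ ENNReal.ofReal (ρ + C * ρ ^ 2) := by
  have h0 : (0 : ℝ) ∈ Icc 0 L := ⟨le_rfl, hL.le⟩
  have hC0 : 0 ≤ C := (norm_nonneg _).trans (hC 0 h0)
  obtain ⟨δ, hδ, hCδ⟩ := exists_pos_mul_lt one_pos C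
  obtain ⟨d, hd, hnear⟩ := exists_pos_forall_dist_lt_imp_lt hγ.continuousOn hinj hδ
  have hlim : Tendsto (C * ·) (𝓝 (0 : ℝ)) (𝓝 0) := by
    simpa using (tendsto_id (x := 𝓝 (0 : ℝ))).const_mul C
  have hCρ : ∀ᶠ ρ in 𝓝 (0 : ℝ), C * ρ < 2 / 5 :=
    hlim.eventually (eventually_lt_nhds (by norm_num))
  filter_upwards [self_mem_nhdsWithin, nhdsWithin_le_nhds (eventually_lt_nhds hd),
    nhdsWithin_le_nhds hCρ] with ρ (hρ : 0 < ρ) hρd hCρ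
  have hsub : γ '' Icc 0 L ∩ Metric.ball (γ 0) ρ ⊆ γ '' Icc 0 (min L (ρ + C * ρ ^ 2)) := by
    rintro _ ⟨⟨t, ht, rfl⟩, hball⟩
    have hdist : dist (γ t) (γ 0) < ρ := hball
    have htδ := hnear t ht (hdist.trans hρd)
    refine ⟨t, ⟨ht.1, le_min ht.2 ?_⟩, rfl⟩
    refine le_add_mul_sq_of_sub_mul_sq_div_two_lt hC0 hρ.le hCρ.le ?_ ?_
    · nlinarith
    · rw [dist_eq_norm] at hdist
      linarith [sub_mul_sq_div_two_le_norm_sub hL hγ (hunit 0 h0) hC ht]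
  have hlip : LipschitzOnWith 1 γ (Icc 0 (min L (ρ + C * ρ ^ 2))) :=
    (lipschitzOnWith_one_of_norm_derivWithin_le_one (convex_Icc 0 L)
      (hγ.differentiableOn (by norm_num)) fun t ht => (hunit t ht).le).mono
      (Icc_subset_Icc le_rfl (min_le_left _ _))
  calc μH[1] (γ '' Icc 0 L ∩ Metric.ball (γ 0) ρ)
      ≤ μH[1] (γ '' Icc 0 (min L (ρ + C * ρ ^ 2))) := measure_mono hsub
    _ ≤ ENNReal.ofReal (min L (ρ + C * ρ ^ 2) - 0) := hausdorffMeasure_image_Icc_le hlip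
    _ ≤ ENNReal.ofReal (ρ + C * ρ ^ 2) :=
        ENNReal.ofReal_le_ofReal (by linarith [min_le_right L (ρ + C * ρ ^ 2)])

lemma norm_le_iSup_of_continuousOn_Icc {E : Type*} [NormedAddCommGroup E] {f : ℝ → E}
    {a b : ℝ} (hf : ContinuousOn f (Icc a b)) {t : ℝ} (ht : t ∈ Icc a b) :
    ‖f t‖ ≤ ⨆ s : Icc a b, ‖f s‖ := by
  have hbdd := isCompact_Icc.bddAbove_image hf.norm
  rw [image_eq_range] at hbdd
  exact le_ciSup hbdd ⟨t, ht⟩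

theorem stmt7_general (N : ℕ) (x₀ : EuclideanSpace ℝ (Fin 2))
    (L : Fin N → ℝ) (hL : ∀ i, 0 < L i)
    (γ : Fin N → ℝ → EuclideanSpace ℝ (Fin 2))
    (hsmooth : ∀ i, ContDiffOn ℝ 2 (γ i) (Set.Icc 0 (L i)))
    (hinj : ∀ i, Set.InjOn (γ i) (Set.Icc 0 (L i)))
    (harc : ∀ i, ∀ t ∈ Set.Icc (0:ℝ) (L i), ‖derivWithin (γ i) (Set.Icc 0 (L i)) t‖ = 1)
    (hstart : ∀ i, γ i 0 = x₀) :
    ∃ ρ₀ > (0:ℝ), ∀ ρ ∈ Set.Ioo (0:ℝ) ρ₀,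
      μH[1] ((⋃ i, γ i '' Set.Icc 0 (L i)) ∩ Metric.ball x₀ ρ)
        ≤ ENNReal.ofReal ((N : ℝ) * ρ + (N : ℝ) * ρ ^ 2 *
            ⨆ i, ⨆ t : Set.Icc (0:ℝ) (L i),
              ‖derivWithin (derivWithin (γ i) (Set.Icc 0 (L i))) (Set.Icc 0 (L i)) (t : ℝ)‖) := by
  set M : Fin N → ℝ := fun i => ⨆ t : Set.Icc (0:ℝ) (L i),
    ‖derivWithin (derivWithin (γ i) (Set.Icc 0 (L i))) (Set.Icc 0 (L i)) (t : ℝ)‖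
  set C := ⨆ i, M i
  have hC : ∀ i, ∀ t ∈ Icc 0 (L i),
      ‖derivWithin (derivWithin (γ i) (Icc 0 (L i))) (Icc 0 (L i)) t‖ ≤ C := fun i t ht =>
    (norm_le_iSup_of_continuousOn_Icc (((hsmooth i).derivWithin (uniqueDiffOn_Icc (hL i))
      (by norm_num)).continuousOn_derivWithin (uniqueDiffOn_Icc (hL i)) le_rfl) ht).trans
      (le_ciSup (finite_range M).bddAbove i)
  have hcurves : ∀ᶠ ρ in 𝓝[>] 0, ∀ i,
      μH[1] (γ i '' Icc 0 (L i) ∩ Metric.ball x₀ ρ) ≤ ENNReal.ofReal (ρ + C * ρ ^ 2) :=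
    eventually_all.2 fun i => hstart i ▸ eventually_hausdorffMeasure_image_inter_ball_le (hL i)
      (hsmooth i) (hinj i) (harc i) (hC i)
  obtain ⟨ρ₀, hρ₀, hsub⟩ := mem_nhdsGT_iff_exists_Ioo_subset.1 hcurves
  refine ⟨ρ₀, hρ₀, fun ρ hρ => ?_⟩
  have hC0 : 0 ≤ C := Real.iSup_nonneg fun i => Real.iSup_nonneg fun t => norm_nonneg _
  calc μH[1] ((⋃ i, γ i '' Icc 0 (L i)) ∩ Metric.ball x₀ ρ)
      ≤ ∑ i, μH[1] (γ i '' Icc 0 (L i) ∩ Metric.ball x₀ ρ) := by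
        rw [iUnion_inter]; exact measure_iUnion_fintype_le _ _
    _ ≤ ∑ _i : Fin N, ENNReal.ofReal (ρ + C * ρ ^ 2) := Finset.sum_le_sum fun i _ => hsub hρ i
    _ = ENNReal.ofReal ((N : ℝ) * ρ + (N : ℝ) * ρ ^ 2 * C) := by
        rw [← ENNReal.ofReal_sum_of_nonneg fun _ _ => by have := hρ.1; positivity]
        simp only [Finset.sum_const, Finset.card_univ, Fintype.card_fin, nsmul_eq_mul]
        congr 1
        ring

/-- Lemma 2.6 (general case): `N ≥ 1` injective `C²` arclength-parametrized curves
`γ_i : [0, L_i] → ℝ²` all start at `x₀` and their images meet pairwise only at `x₀`.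
Then there exists `ρ₀ > 0` such that for every `ρ ∈ (0, ρ₀)`,
`H¹((⋃ᵢ Γᵢ) ∩ B_ρ(x₀)) ≤ N ρ + N ρ² maxᵢ sup ‖γᵢ''‖`. -/
theorem stmt7 (N : ℕ) (hN : 1 ≤ N) (x₀ : EuclideanSpace ℝ (Fin 2))
    (L : Fin N → ℝ) (hL : ∀ i, 0 < L i)
    (γ : Fin N → ℝ → EuclideanSpace ℝ (Fin 2))
    (hsmooth : ∀ i, ContDiffOn ℝ 2 (γ i) (Set.Icc 0 (L i)))
    (hinj : ∀ i, Set.InjOn (γ i) (Set.Icc 0 (L i)))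
    (harc : ∀ i, ∀ t ∈ Set.Icc (0:ℝ) (L i), ‖derivWithin (γ i) (Set.Icc 0 (L i)) t‖ = 1)
    (hstart : ∀ i, γ i 0 = x₀)
    (hmeet : ∀ i j, i ≠ j →
      (γ i '' Set.Icc 0 (L i)) ∩ (γ j '' Set.Icc 0 (L j)) = {x₀}) :
    ∃ ρ₀ > (0:ℝ), ∀ ρ ∈ Set.Ioo (0:ℝ) ρ₀,
      μH[1] ((⋃ i, γ i '' Set.Icc 0 (L i)) ∩ Metric.ball x₀ ρ)
        ≤ ENNReal.ofReal ((N : ℝ) * ρ + (N : ℝ) * ρ ^ 2 *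
            ⨆ i, ⨆ t : Set.Icc (0:ℝ) (L i),
              ‖derivWithin (derivWithin (γ i) (Set.Icc 0 (L i))) (Set.Icc 0 (L i)) (t : ℝ)‖) :=
  stmt7_general N x₀ L hL γ hsmooth hinj harc hstart
end

section
/- For every cutoff ζ and every λ > 1, limsup_{ε→0⁺} (1/β_ε) ∫_{β_ε − δ_ε}^{β_ε + δ_ε} ( (ε/2)·q_ε'(r − β_ε)² + (1/ε)·W(q_ε(r − β_ε)) ) · r dr ≤ c₀. -/
open MeasureTheory Filter Set intervalIntegral Topology

/-- The double-well potential `W(z) = (1 - z²)²`. -/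
noncomputable def Wpot (z : ℝ) : ℝ := (1 - z ^ 2) ^ 2

/-- Its derivative `W'(z) = -4z(1 - z²)`. -/
noncomputable def Wpot' (z : ℝ) : ℝ := -4 * z * (1 - z ^ 2)

/-- The constant `c₀ = ∫_{-1}^1 √(2W) = 4√2/3`. -/
noncomputable def cZero : ℝ := 4 * Real.sqrt 2 / 3

/-- The optimal profile `q(t) = tanh(√2 t)`. -/
noncomputable def qprof (t : ℝ) : ℝ := Real.tanh (Real.sqrt 2 * t)

/-- A cutoff function: smooth, compactly supported, valued in `[0,1]`,
equal to `1` on `{ |t| ≤ 1 }` and to `0` on `{ |t| ≥ 2 }`. -/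
def IsCutoff (ζ : ℝ → ℝ) : Prop :=
  ContDiff ℝ (⊤ : ℕ∞) ζ ∧ HasCompactSupport ζ ∧ (∀ t, ζ t ∈ Set.Icc (0:ℝ) 1) ∧
    (∀ t, |t| ≤ 1 → ζ t = 1) ∧ (∀ t, 2 ≤ |t| → ζ t = 0)

/-- `δ_ε = λ ε |log ε|`. -/
noncomputable def deltaE (lam ε : ℝ) : ℝ := lam * ε * |Real.log ε|

/-- The truncated optimal profile
`q_ε(t) = ζ(2t/δ_ε) q(t/ε) + sign(t) (1 - ζ(2t/δ_ε))`. -/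
noncomputable def qE (ζ : ℝ → ℝ) (lam ε t : ℝ) : ℝ :=
  ζ (2 * t / deltaE lam ε) * qprof (t / ε) + Real.sign t * (1 - ζ (2 * t / deltaE lam ε))



lemma hasDerivAt_tanh' (x : ℝ) : HasDerivAt Real.tanh (1 - Real.tanh x ^ 2) x := by
  have h : HasDerivAt (fun x => Real.sinh x / Real.cosh x)
      ((Real.cosh x * Real.cosh x - Real.sinh x * Real.sinh x) / Real.cosh x ^ 2) x :=
    (Real.hasDerivAt_sinh x).div (Real.hasDerivAt_cosh x) (ne_of_gt (Real.cosh_pos x))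
  have he : (fun x => Real.sinh x / Real.cosh x) = Real.tanh := by
    funext y; rw [Real.tanh_eq_sinh_div_cosh]
  rw [he] at h
  convert h using 1
  have hc := Real.cosh_pos x
  rw [Real.tanh_eq_sinh_div_cosh]
  have h2 := Real.cosh_sq_sub_sinh_sq x
  field_simp

lemma tanh_le_one' (x : ℝ) : Real.tanh x ≤ 1 := by
  rw [Real.tanh_eq_sinh_div_cosh, div_le_one (Real.cosh_pos x)]
  nlinarith [Real.cosh_sub_sinh x, Real.exp_pos (-x)]

lemma neg_one_le_tanh' (x : ℝ) : -1 ≤ Real.tanh x := by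
  rw [Real.tanh_eq_sinh_div_cosh, le_div_iff₀ (Real.cosh_pos x)]
  nlinarith [Real.cosh_add_sinh x, Real.exp_pos x]

lemma one_sub_tanh_le' (x : ℝ) : 1 - Real.tanh x ≤ 2 * Real.exp (-(2*x)) := by
  have hc := Real.cosh_pos x
  have h1 : 1 - Real.tanh x = Real.exp (-x) / Real.cosh x := by
    rw [Real.tanh_eq_sinh_div_cosh]
    field_simp
    exact Real.cosh_sub_sinh x
  rw [h1, div_le_iff₀ hc]
  have h2 : Real.exp x / 2 ≤ Real.cosh x := by
    rw [Real.cosh_eq]; linarith [Real.exp_pos (-x)]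
  have h4 : Real.exp (-(2*x)) * Real.exp x = Real.exp (-x) := by
    rw [← Real.exp_add]; ring_nf
  nlinarith [mul_le_mul_of_nonneg_left h2 (Real.exp_pos (-(2*x))).le]

lemma continuous_qprof : Continuous qprof := by
  have h : Continuous Real.tanh := by
    have : Real.tanh = fun x => Real.sinh x / Real.cosh x := by
      funext y; rw [Real.tanh_eq_sinh_div_cosh]
    rw [this]
    exact Real.continuous_sinh.div Real.continuous_cosh fun x => (Real.cosh_pos x).ne'
  exact h.comp (continuous_const.mul continuous_id)

lemma hasDerivAt_qprof {ε : ℝ} (hε : ε ≠ 0) (t : ℝ) :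
    HasDerivAt (fun s => qprof (s/ε)) ((1 - qprof (t/ε)^2) * (Real.sqrt 2/ε)) t := by
  have h1 : HasDerivAt (fun s : ℝ => Real.sqrt 2 * (s/ε)) (Real.sqrt 2/ε) t := by
    simpa [mul_div_assoc, mul_one, div_eq_mul_inv] using ((hasDerivAt_id t).div_const ε).const_mul (Real.sqrt 2)
  simpa [qprof, Function.comp_def] using (hasDerivAt_tanh' (Real.sqrt 2 * (t/ε))).comp t h1

lemma middle_integral {ε : ℝ} (hε : ε ≠ 0) {a : ℝ} (ha : 0 ≤ a) :
    ∫ t in (-a)..a, (2/ε) * (1 - qprof (t/ε)^2)^2 ≤ cZero := by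
  set G : ℝ → ℝ := fun t => Real.sqrt 2 * (qprof (t/ε) - qprof (t/ε)^3 / 3) with hGdef
  have hG : ∀ t, HasDerivAt G ((2/ε) * (1 - qprof (t/ε)^2)^2) t := by
    intro t
    have h1 := hasDerivAt_qprof hε t
    have h2 := ((h1.pow 3).div_const 3)
    have h3 := (h1.sub h2).const_mul (Real.sqrt 2)
    refine HasDerivAt.congr_deriv h3 ?_
    have hs : Real.sqrt 2 * Real.sqrt 2 = 2 := Real.mul_self_sqrt (by norm_num)
    have hs2 : Real.sqrt 2 ^ 2 = 2 := Real.sq_sqrt (by norm_num)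
    field_simp
    ring_nf
    rw [hs2]
    ring
  have hcont : Continuous fun t => (2/ε) * (1 - qprof (t/ε)^2)^2 :=
    continuous_const.mul ((continuous_const.sub
      ((continuous_qprof.comp (continuous_id.div_const ε)).pow 2)).pow 2)
  have hint : ∫ t in (-a)..a, (2/ε) * (1 - qprof (t/ε)^2)^2 = G a - G (-a) :=
    intervalIntegral.integral_eq_sub_of_hasDerivAt (fun t _ => hG t)
      (hcont.intervalIntegrable _ _)
  rw [hint]
  have hodd : qprof (-a/ε) = - qprof (a/ε) := by
    rw [neg_div, qprof, qprof, mul_neg, Real.tanh_neg]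
  set T := qprof (a/ε) with hT
  have hT1 : T ≤ 1 := tanh_le_one' _
  have hT0 : -1 ≤ T := neg_one_le_tanh' _
  have hkey : G a - G (-a) = Real.sqrt 2 * (2*T - 2*T^3/3) := by
    simp only [hGdef, hodd]
    ring
  rw [hkey, cZero]
  have h43 : 2*T - 2*T^3/3 ≤ 4/3 := by
    nlinarith [mul_nonneg (sq_nonneg (1-T)) (show (0:ℝ) ≤ T + 2 by linarith)]
  have hs0 : (0:ℝ) ≤ Real.sqrt 2 := Real.sqrt_nonneg 2
  calc Real.sqrt 2 * (2*T - 2*T^3/3) ≤ Real.sqrt 2 * (4/3) := by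
        exact mul_le_mul_of_nonneg_left h43 hs0
    _ = 4 * Real.sqrt 2 / 3 := by ring

lemma qE_pos_eq (ζ : ℝ → ℝ) {lam ε t : ℝ} (ht : 0 < t) :
    qE ζ lam ε t = ζ (2*t/deltaE lam ε) * (qprof (t/ε) - 1) + 1 := by
  simp [qE, Real.sign_of_pos ht]; ring

lemma qE_neg_eq (ζ : ℝ → ℝ) {lam ε t : ℝ} (ht : t < 0) :
    qE ζ lam ε t = ζ (2*t/deltaE lam ε) * (qprof (t/ε) + 1) - 1 := by
  simp [qE, Real.sign_of_neg ht]; ring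

lemma qE_mid_eq (ζ : ℝ → ℝ) (hζ : IsCutoff ζ) {lam ε t : ℝ} (hδ : 0 < deltaE lam ε)
    (ht : |t| ≤ deltaE lam ε / 2) : qE ζ lam ε t = qprof (t/ε) := by
  have h1 : ζ (2*t/deltaE lam ε) = 1 := by
    apply hζ.2.2.2.1
    rw [abs_div, abs_of_pos hδ, div_le_one hδ, abs_mul]
    simp only [abs_two]; linarith
  simp [qE, h1]

lemma hasDerivAt_qE_pos (ζ : ℝ → ℝ) (hζs : ContDiff ℝ (⊤ : ℕ∞) ζ) {lam ε : ℝ} (hε : ε ≠ 0)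
    {t : ℝ} (ht : 0 < t) :
    HasDerivAt (qE ζ lam ε)
      (deriv ζ (2*t/deltaE lam ε) * (2/deltaE lam ε) * (qprof (t/ε) - 1)
        + ζ (2*t/deltaE lam ε) * ((1 - qprof (t/ε)^2) * (Real.sqrt 2/ε))) t := by
  have h1 : HasDerivAt (fun s : ℝ => 2*s/deltaE lam ε) (2/deltaE lam ε) t := by
    simpa [mul_div_assoc, mul_one, div_eq_mul_inv, mul_assoc] using ((hasDerivAt_id t).div_const (deltaE lam ε)).const_mul (2:ℝ)
  have hg : HasDerivAt (fun s => ζ (2*s/deltaE lam ε)) (deriv ζ (2*t/deltaE lam ε) * (2/deltaE lam ε)) t :=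
    ((hζs.differentiable (by simp) (2*t/deltaE lam ε)).hasDerivAt).comp t h1
  have hq := hasDerivAt_qprof hε t
  have hmain := (hg.mul (hq.sub_const 1)).add_const 1
  refine hmain.congr_of_eventuallyEq ?_
  filter_upwards [Ioi_mem_nhds ht] with s hs
  exact qE_pos_eq ζ hs

lemma hasDerivAt_qE_neg (ζ : ℝ → ℝ) (hζs : ContDiff ℝ (⊤ : ℕ∞) ζ) {lam ε : ℝ} (hε : ε ≠ 0)
    {t : ℝ} (ht : t < 0) :
    HasDerivAt (qE ζ lam ε)
      (deriv ζ (2*t/deltaE lam ε) * (2/deltaE lam ε) * (qprof (t/ε) + 1)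
        + ζ (2*t/deltaE lam ε) * ((1 - qprof (t/ε)^2) * (Real.sqrt 2/ε))) t := by
  have h1 : HasDerivAt (fun s : ℝ => 2*s/deltaE lam ε) (2/deltaE lam ε) t := by
    simpa [mul_div_assoc, mul_one, div_eq_mul_inv, mul_assoc] using ((hasDerivAt_id t).div_const (deltaE lam ε)).const_mul (2:ℝ)
  have hg : HasDerivAt (fun s => ζ (2*s/deltaE lam ε)) (deriv ζ (2*t/deltaE lam ε) * (2/deltaE lam ε)) t :=
    ((hζs.differentiable (by simp) (2*t/deltaE lam ε)).hasDerivAt).comp t h1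
  have hq := hasDerivAt_qprof hε t
  have hmain := (hg.mul (hq.add_const 1)).sub_const 1
  refine hmain.congr_of_eventuallyEq ?_
  filter_upwards [Iio_mem_nhds ht] with s hs
  exact qE_neg_eq ζ hs

lemma hasDerivAt_qE_mid (ζ : ℝ → ℝ) (hζ : IsCutoff ζ) {lam ε : ℝ} (hε : ε ≠ 0)
    (hδ : 0 < deltaE lam ε) {t : ℝ} (ht : |t| < deltaE lam ε / 2) :
    HasDerivAt (qE ζ lam ε) ((1 - qprof (t/ε)^2) * (Real.sqrt 2/ε)) t := by
  refine HasDerivAt.congr_of_eventuallyEq (hasDerivAt_qprof hε t) ?_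
  have habs : t ∈ Ioo (-(deltaE lam ε/2)) (deltaE lam ε/2) := by
    rw [mem_Ioo]; exact abs_lt.1 ht
  filter_upwards [Ioo_mem_nhds habs.1 habs.2] with s hs
  exact qE_mid_eq ζ hζ hδ (abs_le.2 ⟨by linarith [hs.1], by linarith [hs.2]⟩)

set_option maxHeartbeats 1000000 in
lemma trans_bound (ζ : ℝ → ℝ) (hζ : IsCutoff ζ) {lam ε C : ℝ} (hε : 0 < ε) (hε1 : ε < 1)
    (hlam : 1 ≤ lam) (hC : ∀ s, |deriv ζ s| ≤ C)
    (hCδ : 4*C/deltaE lam ε ≤ 4/ε) (hδ : 0 < deltaE lam ε)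
    {t : ℝ} (ht : deltaE lam ε/2 ≤ |t|) :
    (ε/2) * (deriv (qE ζ lam ε) t)^2 + (1/ε) * Wpot (qE ζ lam ε t) ≤ 114 * ε := by
  have hs2 : (1:ℝ) ≤ Real.sqrt 2 := by
    nlinarith [Real.sq_sqrt (show (0:ℝ) ≤ 2 by norm_num), Real.sqrt_nonneg 2]
  have hs2' : Real.sqrt 2 ≤ 3/2 := by
    nlinarith [Real.sq_sqrt (show (0:ℝ) ≤ 2 by norm_num), Real.sqrt_nonneg 2]
  have hlog : |Real.log ε| = -Real.log ε := abs_of_neg (Real.log_neg hε hε1)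
  have htne : t ≠ 0 := by
    intro h; rw [h] at ht; simp at ht; linarith
  obtain ⟨E, hEdef⟩ : ∃ E, Real.exp (-(2 * (Real.sqrt 2 * (|t|/ε)))) = E := ⟨_, rfl⟩
  have hEpos : 0 < E := hEdef ▸ Real.exp_pos _
  have hEbound : E ≤ ε := by
    rw [← hEdef]
    have h1 : -Real.log ε ≤ 2 * (Real.sqrt 2 * (|t|/ε)) := by
      have h3 : lam * ε * (-Real.log ε) / 2 ≤ |t| := by rw [← hlog]; exact ht
      have h4 : -Real.log ε ≤ lam * (-Real.log ε) := by
        nlinarith [Real.log_neg hε hε1]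
      have h5 : lam * (-Real.log ε) ≤ 2 * (|t|/ε) := by
        rw [show 2*(|t|/ε) = (2*|t|)/ε by ring, le_div_iff₀ hε]
        nlinarith [h3]
      have h6 : 2 * (|t|/ε) ≤ 2 * (Real.sqrt 2 * (|t|/ε)) := by
        have hpos : 0 ≤ |t|/ε := div_nonneg (abs_nonneg t) hε.le
        nlinarith
      linarith
    calc Real.exp (-(2 * (Real.sqrt 2 * (|t|/ε)))) ≤ Real.exp (Real.log ε) := by
          apply Real.exp_le_exp.2; linarith
      _ = ε := Real.exp_log hε
  have hC0 : 0 ≤ C := le_trans (abs_nonneg _) (hC 0)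
  obtain ⟨X, hX⟩ : ∃ X, ζ (2*t/deltaE lam ε) = X := ⟨_, rfl⟩
  have hX01 : 0 ≤ X ∧ X ≤ 1 := hX ▸ ⟨(hζ.2.2.1 _).1, (hζ.2.2.1 _).2⟩
  obtain ⟨q, hq⟩ : ∃ q, qprof (t/ε) = q := ⟨_, rfl⟩
  have hq1 : q ≤ 1 := hq ▸ tanh_le_one' _
  have hq0 : -1 ≤ q := hq ▸ neg_one_le_tanh' _
  obtain ⟨dz, hdz⟩ : ∃ d, deriv ζ (2*t/deltaE lam ε) = d := ⟨_, rfl⟩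
  have hdzC : |dz| ≤ C := hdz ▸ hC _
  obtain ⟨w, s, hqEeq, hderiv, hwabs, hs1, h1q2'⟩ :
      ∃ w s, qE ζ lam ε t = X*w + s ∧
        deriv (qE ζ lam ε) t = dz*(2/deltaE lam ε)*w + X*((1-q^2)*(Real.sqrt 2/ε)) ∧
        |w| ≤ 2*E ∧ s^2 = 1 ∧ 1 - q^2 ≤ 4*E := by
    rcases lt_or_gt_of_ne htne with htneg | htpos
    · have habs : |t| = -t := abs_of_neg htneg
      have key := one_sub_tanh_le' (Real.sqrt 2 * (|t|/ε))
      have htanh : Real.tanh (Real.sqrt 2 * (|t|/ε)) = -q := by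
        rw [← hq, qprof, habs, show Real.sqrt 2 * (-t/ε) = -(Real.sqrt 2 * (t/ε)) by ring,
          Real.tanh_neg]
      rw [htanh, hEdef] at key
      refine ⟨q+1, -1, ?_, ?_, ?_, by norm_num, by nlinarith⟩
      · rw [qE_neg_eq ζ htneg, hX, hq]; ring
      · rw [(hasDerivAt_qE_neg ζ hζ.1 hε.ne' htneg).deriv, hX, hq, hdz]
      · rw [abs_of_nonneg (by linarith : (0:ℝ) ≤ q + 1)]; linarith
    · have habs : |t| = t := abs_of_pos htpos
      have key := one_sub_tanh_le' (Real.sqrt 2 * (|t|/ε))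
      have htanh : Real.tanh (Real.sqrt 2 * (|t|/ε)) = q := by
        rw [← hq, qprof, habs]
      rw [htanh, hEdef] at key
      refine ⟨q-1, 1, ?_, ?_, ?_, by norm_num, by nlinarith⟩
      · rw [qE_pos_eq ζ htpos, hX, hq]
      · rw [(hasDerivAt_qE_pos ζ hζ.1 hε.ne' htpos).deriv, hX, hq, hdz]
      · rw [abs_of_nonpos (by linarith : q - 1 ≤ 0)]; linarith
  -- common part
  have h1q2 : 0 ≤ 1 - q^2 := by nlinarith
  have hterm1 : |dz * (2/deltaE lam ε) * w| ≤ 4/ε * E := by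
    rw [abs_mul, abs_mul, abs_of_pos (by positivity : (0:ℝ) < 2/deltaE lam ε)]
    calc |dz| * (2/deltaE lam ε) * |w| ≤ C * (2/deltaE lam ε) * (2*E) := by
          gcongr
      _ = (4*C/deltaE lam ε) * E := by ring
      _ ≤ 4/ε * E := by gcongr
  have hterm2 : |X * ((1 - q^2) * (Real.sqrt 2/ε))| ≤ 6/ε * E := by
    rw [abs_mul, abs_mul, abs_of_nonneg hX01.1, abs_of_nonneg h1q2,
      abs_of_pos (by positivity : (0:ℝ) < Real.sqrt 2/ε)]
    have g1 : Real.sqrt 2/ε ≤ (3/2)/ε := by gcongr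
    have g2 : (1-q^2) * (Real.sqrt 2/ε) ≤ (4*E) * ((3/2)/ε) :=
      mul_le_mul h1q2' g1 (by positivity) (by positivity)
    calc X * ((1-q^2) * (Real.sqrt 2/ε)) ≤ 1 * ((4*E) * ((3/2)/ε)) :=
          mul_le_mul hX01.2 g2 (mul_nonneg h1q2 (by positivity)) (by norm_num)
      _ = 6/ε * E := by ring
  have hD : |deriv (qE ζ lam ε) t| ≤ 10/ε * E := by
    rw [hderiv]
    calc |dz * (2/deltaE lam ε) * w + X * ((1 - q^2) * (Real.sqrt 2/ε))|
        ≤ |dz * (2/deltaE lam ε) * w| + |X * ((1 - q^2) * (Real.sqrt 2/ε))| := abs_add_le _ _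
      _ ≤ 4/ε * E + 6/ε * E := add_le_add hterm1 hterm2
      _ = 10/ε * E := by ring
  have hD2 : (deriv (qE ζ lam ε) t)^2 ≤ (10/ε * E)^2 := by
    rw [← sq_abs]
    exact pow_le_pow_left₀ (abs_nonneg _) hD 2
  have hWb : Wpot (qE ζ lam ε t) ≤ 64 * E^2 := by
    rw [hqEeq, Wpot]
    have hXw : |X * w| ≤ 2*E := by
      rw [abs_mul, abs_of_nonneg hX01.1]
      calc X * |w| ≤ 1 * (2*E) := mul_le_mul hX01.2 hwabs (abs_nonneg _) (by norm_num)
        _ = 2*E := by ring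
    have hXw2 : |X * w| ≤ 2 := by linarith [hEbound, hε1]
    have hsabs : |s| = 1 := by
      have h0 : (s-1)*(s+1) = 0 := by linear_combination hs1
      rcases mul_eq_zero.1 h0 with h | h
      · have : s = 1 := by linarith
        simp [this]
      · have : s = -1 := by linarith
        simp [this]
    have hfact : 1 - (X*w + s)^2 = -(X*w) * (X*w + 2*s) := by linear_combination (-1:ℝ) * hs1
    have h8 : |1 - (X*w + s)^2| ≤ 8*E := by
      rw [hfact, abs_mul, abs_neg]
      have h9 : |X*w + 2*s| ≤ 4 := by
        calc |X*w + 2*s| ≤ |X*w| + |2*s| := abs_add_le _ _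
          _ ≤ 2 + 2 := by
              have h2s : |2*s| = 2 := by rw [abs_mul, abs_two, hsabs]; norm_num
              linarith [hXw2, h2s]
          _ = 4 := by norm_num
      calc |X*w| * |X*w + 2*s| ≤ (2*E) * 4 :=
            mul_le_mul hXw h9 (abs_nonneg _) (by positivity)
        _ = 8*E := by ring
    calc (1 - (X*w + s)^2)^2 = |1 - (X*w + s)^2|^2 := (sq_abs _).symm
      _ ≤ (8*E)^2 := pow_le_pow_left₀ (abs_nonneg _) h8 2
      _ = 64 * E^2 := by ring
  have hfin1 : (ε/2) * (deriv (qE ζ lam ε) t)^2 ≤ 50 * ε := by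
    have h1 : (ε/2) * (deriv (qE ζ lam ε) t)^2 ≤ (ε/2) * ((10/ε * E)^2) :=
      mul_le_mul_of_nonneg_left hD2 (by positivity)
    have h2 : (ε/2) * ((10/ε * E)^2) = 50 * E^2 / ε := by field_simp; ring
    rw [h2] at h1
    have h3 : 50 * E^2 / ε ≤ 50 * ε := by
      rw [div_le_iff₀ hε]; nlinarith
    linarith
  have hfin2 : (1/ε) * Wpot (qE ζ lam ε t) ≤ 64 * ε := by
    have h4 : (1/ε) * Wpot (qE ζ lam ε t) ≤ (1/ε) * (64 * E^2) :=
      mul_le_mul_of_nonneg_left hWb (by positivity)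
    have h5 : (1/ε) * (64 * E^2) = 64 * E^2 / ε := by ring
    rw [h5] at h4
    have h6 : 64 * E^2 / ε ≤ 64 * ε := by
      rw [div_le_iff₀ hε]; nlinarith
    linarith
  linarith

lemma energy_mid {ε : ℝ} (hε : ε ≠ 0) (A : ℝ) :
    (ε/2) * (A * (Real.sqrt 2/ε))^2 + (1/ε) * A^2 = (2/ε) * A^2 := by
  have h2 : Real.sqrt 2^2 = 2 := Real.sq_sqrt (by norm_num)
  field_simp
  linear_combination A^2 * h2

set_option maxHeartbeats 2000000 in
/-- Estimate (4.13): for every cutoff `ζ` and every `λ > 1`,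
`limsup_{ε→0⁺} (1/β_ε) ∫_{β_ε-δ_ε}^{β_ε+δ_ε} ((ε/2) q_ε'(r-β_ε)² + (1/ε) W(q_ε(r-β_ε))) r dr ≤ c₀`,
where `β_ε → 0` and `ε|log ε|/β_ε → 0`. -/
theorem stmt10 (ζ : ℝ → ℝ) (hζ : IsCutoff ζ) (lam : ℝ) (hlam : 1 < lam)
    (β : ℝ → ℝ) (hβpos : ∀ ε ∈ Set.Ioo (0:ℝ) 1, 0 < β ε)
    (hβ0 : Tendsto β (𝓝[>] (0:ℝ)) (𝓝 0))
    (hscal : Tendsto (fun ε : ℝ => ε * |Real.log ε| / β ε) (𝓝[>] (0:ℝ)) (𝓝 0)) :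
    Filter.limsup (fun ε : ℝ =>
        (1 / β ε) * ∫ r in (β ε - deltaE lam ε)..(β ε + deltaE lam ε),
          ((ε / 2) * (deriv (qE ζ lam ε) (r - β ε)) ^ 2
            + (1 / ε) * Wpot (qE ζ lam ε (r - β ε))) * r)
      (𝓝[>] (0:ℝ)) ≤ cZero := by
  obtain ⟨hζ1, hζ2, hζ3, hζ4, hζ5⟩ := hζ
  obtain ⟨C, hCn⟩ := (hζ2.deriv).exists_bound_of_continuous (hζ1.continuous_deriv (by simp))
  have hC' : ∀ s, |deriv ζ s| ≤ C := fun s => by simpa [Real.norm_eq_abs] using hCn s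
  have hlam0 : 0 < lam := by linarith
  have hδ0 : Tendsto (fun ε => deltaE lam ε) (𝓝[>] (0:ℝ)) (𝓝 0) := by
    have h1 : Tendsto (fun ε : ℝ => (ε * |Real.log ε| / β ε) * β ε) (𝓝[>] (0:ℝ)) (𝓝 0) := by
      simpa using hscal.mul hβ0
    have h2 : Tendsto (fun ε : ℝ => ε * |Real.log ε|) (𝓝[>] (0:ℝ)) (𝓝 0) := by
      apply h1.congr'
      filter_upwards [Ioo_mem_nhdsGT (one_pos : (0:ℝ) < 1)] with ε hε
      rw [div_mul_cancel₀ _ (hβpos ε hε).ne']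
    have h3 := h2.const_mul lam
    simp only [mul_zero] at h3
    apply h3.congr
    intro ε; rw [deltaE]; ring
  set g : ℝ → ℝ := fun ε => (1 + lam * (ε * |Real.log ε| / β ε)) *
      (cZero + 114 * (ε * deltaE lam ε)) with hgdef
  have hg : Tendsto g (𝓝[>] (0:ℝ)) (𝓝 cZero) := by
    have hε0 : Tendsto (fun ε : ℝ => ε) (𝓝[>] (0:ℝ)) (𝓝 0) :=
      tendsto_id.mono_right nhdsWithin_le_nhds
    have h3 : Tendsto (fun ε : ℝ => 114 * (ε * deltaE lam ε)) (𝓝[>] (0:ℝ)) (𝓝 0) := by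
      simpa using (hε0.mul hδ0).const_mul (114:ℝ)
    have h4 : Tendsto (fun ε : ℝ => 1 + lam * (ε * |Real.log ε| / β ε)) (𝓝[>] (0:ℝ)) (𝓝 1) := by
      have := (hscal.const_mul lam).const_add (1:ℝ)
      simpa using this
    have h5 := h4.mul ((tendsto_const_nhds (x := cZero)).add h3)
    rw [hgdef]
    simpa using h5
  have hbound : ∀ᶠ ε in 𝓝[>] (0:ℝ),
      0 ≤ (1 / β ε) * (∫ r in (β ε - deltaE lam ε)..(β ε + deltaE lam ε),
          ((ε / 2) * (deriv (qE ζ lam ε) (r - β ε)) ^ 2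
            + (1 / ε) * Wpot (qE ζ lam ε (r - β ε))) * r) ∧
      (1 / β ε) * (∫ r in (β ε - deltaE lam ε)..(β ε + deltaE lam ε),
          ((ε / 2) * (deriv (qE ζ lam ε) (r - β ε)) ^ 2
            + (1 / ε) * Wpot (qE ζ lam ε (r - β ε))) * r) ≤ g ε := by
    filter_upwards [Ioo_mem_nhdsGT (one_pos : (0:ℝ) < 1),
      hscal.eventually (eventually_le_nhds (by positivity : (0:ℝ) < 1/(2*lam))),
      Real.tendsto_log_nhdsGT_zero.eventually (eventually_le_atBot (-(C/lam)))]
      with ε hε1 hε2 hε3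
    obtain ⟨hε0, hε1'⟩ := hε1
    have hβ := hβpos ε ⟨hε0, hε1'⟩
    have hlogneg := Real.log_neg hε0 hε1'
    have hlogabs : |Real.log ε| = -Real.log ε := abs_of_neg hlogneg
    have hδpos' : 0 < deltaE lam ε := by
      rw [deltaE, hlogabs]
      apply mul_pos (mul_pos hlam0 hε0); linarith
    obtain ⟨δ, hδdef⟩ : ∃ d, deltaE lam ε = d := ⟨_, rfl⟩
    have hδpos : 0 < δ := hδdef ▸ hδpos'
    have h5 : ε * |Real.log ε| ≤ 1/(2*lam) * β ε := (div_le_iff₀ hβ).1 hε2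
    have hδβ : δ ≤ β ε / 2 := by
      rw [← hδdef, deltaE]
      have h6 := mul_le_mul_of_nonneg_left h5 hlam0.le
      have h7 : lam * (1/(2*lam) * β ε) = β ε / 2 := by field_simp
      calc lam * ε * |Real.log ε| = lam * (ε * |Real.log ε|) := by ring
        _ ≤ lam * (1/(2*lam) * β ε) := h6
        _ = β ε / 2 := h7
    have hCδ : 4*C/deltaE lam ε ≤ 4/ε := by
      rw [div_le_div_iff₀ hδpos' hε0]
      have h8 : C ≤ lam * |Real.log ε| := by
        rw [hlogabs]
        have h9 : lam * (C/lam) = C := by field_simp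
        nlinarith [hε3, hlam0]
      rw [deltaE]; nlinarith [h8, hε0]
    have hC0 : 0 ≤ C := le_trans (abs_nonneg _) (hC' 0)
    have hcZ : (0:ℝ) ≤ cZero := by rw [cZero]; positivity
    rw [hδdef]
    set eF : ℝ → ℝ := fun t => (ε/2) * (deriv (qE ζ lam ε) t)^2
        + (1/ε) * Wpot (qE ζ lam ε t) with heF
    have heNonneg : ∀ t, 0 ≤ eF t := by
      intro t
      have hW : 0 ≤ Wpot (qE ζ lam ε t) := by rw [Wpot]; positivity
      simp only [heF]
      have : 0 ≤ (ε/2) * (deriv (qE ζ lam ε) t)^2 := by positivity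
      have h2 : 0 ≤ (1/ε) * Wpot (qE ζ lam ε t) :=
        mul_nonneg (by positivity) hW
      linarith
    have hrw : (∫ r in (β ε - δ)..(β ε + δ),
        ((ε / 2) * (deriv (qE ζ lam ε) (r - β ε)) ^ 2
          + (1 / ε) * Wpot (qE ζ lam ε (r - β ε))) * r)
        = ∫ t in (-δ)..δ, eF t * (t + β ε) := by
      calc (∫ r in (β ε - δ)..(β ε + δ),
          ((ε / 2) * (deriv (qE ζ lam ε) (r - β ε)) ^ 2
            + (1 / ε) * Wpot (qE ζ lam ε (r - β ε))) * r)
          = ∫ r in (β ε - δ)..(β ε + δ), (fun t => eF t * (t + β ε)) (r - β ε) := by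
            apply intervalIntegral.integral_congr
            intro x _
            simp only [heF]
            ring
        _ = ∫ t in (β ε - δ - β ε)..(β ε + δ - β ε), eF t * (t + β ε) :=
            intervalIntegral.integral_comp_sub_right (fun t => eF t * (t + β ε)) (β ε)
        _ = ∫ t in (-δ)..δ, eF t * (t + β ε) := by congr 1 <;> ring
    rw [hrw]
    by_cases hint : IntervalIntegrable (fun t => eF t * (t + β ε)) volume (-δ) δ
    case neg =>
      rw [intervalIntegral.integral_undef hint]
      have hu0 : 0 ≤ ε * |Real.log ε| / β ε := div_nonneg (by positivity) hβ.le
      have hgnn : 0 ≤ g ε := by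
        rw [hgdef]
        have h1 : (0:ℝ) ≤ 1 + lam * (ε * |Real.log ε| / β ε) := by nlinarith
        have h2 : (0:ℝ) ≤ cZero + 114 * (ε * deltaE lam ε) := by
          have : 0 ≤ ε * deltaE lam ε := mul_nonneg hε0.le hδpos'.le
          linarith
        exact mul_nonneg h1 h2
      simp only [mul_zero]
      exact ⟨le_refl 0, hgnn⟩
    case pos =>
      have habδ : -δ ≤ δ := by linarith
      have hgcont : ContinuousOn (fun t : ℝ => (t + β ε)⁻¹) (Set.uIcc (-δ) δ) := by
        apply ContinuousOn.inv₀ ((continuous_id.add continuous_const).continuousOn)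
        intro x hx
        rw [Set.uIcc_of_le habδ] at hx
        have hpos : (0:ℝ) < x + β ε := by linarith [hx.1]
        exact ne_of_gt hpos
      have he_int : IntervalIntegrable eF volume (-δ) δ := by
        have h2 := hint.mul_continuousOn hgcont
        rw [intervalIntegrable_iff] at h2 ⊢
        apply h2.congr_fun ?_ measurableSet_uIoc
        intro x hx
        rw [Set.uIoc_of_le habδ] at hx
        have hxβ : (0:ℝ) < x + β ε := by linarith [hx.1]
        show eF x * (x + β ε) * (x + β ε)⁻¹ = eF x
        exact mul_inv_cancel_right₀ hxβ.ne' _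
      have hi1 : IntervalIntegrable eF volume (-δ) (-(δ/2)) := by
        apply he_int.mono_set
        rw [Set.uIcc_of_le habδ, Set.uIcc_of_le (by linarith : -δ ≤ -(δ/2))]
        apply Set.Icc_subset_Icc <;> linarith
      have hi2 : IntervalIntegrable eF volume (-(δ/2)) (δ/2) := by
        apply he_int.mono_set
        rw [Set.uIcc_of_le habδ, Set.uIcc_of_le (by linarith : -(δ/2) ≤ δ/2)]
        apply Set.Icc_subset_Icc <;> linarith
      have hi3 : IntervalIntegrable eF volume (δ/2) δ := by
        apply he_int.mono_set
        rw [Set.uIcc_of_le habδ, Set.uIcc_of_le (by linarith : δ/2 ≤ δ)]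
        apply Set.Icc_subset_Icc <;> linarith
      have a1 := intervalIntegral.integral_add_adjacent_intervals hi1 hi2
      have a2 := intervalIntegral.integral_add_adjacent_intervals (hi1.trans hi2) hi3
      have hside1 : (∫ t in (-δ)..(-(δ/2)), eF t) ≤ 114*ε*(δ/2) := by
        have hm := intervalIntegral.integral_mono_on (by linarith : -δ ≤ -(δ/2)) hi1
          (intervalIntegrable_const (c := 114*ε)) ?_
        · rw [intervalIntegral.integral_const, smul_eq_mul] at hm
          calc (∫ t in (-δ)..(-(δ/2)), eF t) ≤ (-(δ/2) - -δ) * (114*ε) := hm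
            _ = 114*ε*(δ/2) := by ring
        · intro x hx
          have habs : deltaE lam ε/2 ≤ |x| := by
            rw [hδdef, abs_of_neg (by linarith [hx.2] : x < 0)]
            linarith [hx.2]
          simpa only [heF] using trans_bound ζ ⟨hζ1, hζ2, hζ3, hζ4, hζ5⟩ hε0 hε1'
            hlam.le hC' hCδ hδpos' habs
      have hside3 : (∫ t in (δ/2)..δ, eF t) ≤ 114*ε*(δ/2) := by
        have hm := intervalIntegral.integral_mono_on (by linarith : δ/2 ≤ δ) hi3
          (intervalIntegrable_const (c := 114*ε)) ?_
        · rw [intervalIntegral.integral_const, smul_eq_mul] at hm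
          calc (∫ t in (δ/2)..δ, eF t) ≤ (δ - δ/2) * (114*ε) := hm
            _ = 114*ε*(δ/2) := by ring
        · intro x hx
          have habs : deltaE lam ε/2 ≤ |x| := by
            rw [hδdef, abs_of_pos (by linarith [hx.1] : 0 < x)]
            linarith [hx.1]
          simpa only [heF] using trans_bound ζ ⟨hζ1, hζ2, hζ3, hζ4, hζ5⟩ hε0 hε1'
            hlam.le hC' hCδ hδpos' habs
      have hmid : (∫ t in (-(δ/2))..(δ/2), eF t) ≤ cZero := by
        have hcong : (∫ t in (-(δ/2))..(δ/2), eF t)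
            = ∫ t in (-(δ/2))..(δ/2), (2/ε) * (1 - qprof (t/ε)^2)^2 := by
          apply intervalIntegral.integral_congr_ae
          have hae : ∀ᵐ (x:ℝ), x ∉ ({δ/2} : Set ℝ) :=
            measure_eq_zero_iff_ae_notMem.mp Real.volume_singleton
          filter_upwards [hae] with x hxne hxmem
          rw [Set.uIoc_of_le (by linarith : -(δ/2) ≤ δ/2)] at hxmem
          have hxlt : |x| < deltaE lam ε/2 := by
            rw [hδdef]
            exact abs_lt.2 ⟨hxmem.1, lt_of_le_of_ne hxmem.2 (by simpa using hxne)⟩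
          have hd := (hasDerivAt_qE_mid ζ ⟨hζ1, hζ2, hζ3, hζ4, hζ5⟩ hε0.ne' hδpos' hxlt).deriv
          have hqeq := qE_mid_eq ζ ⟨hζ1, hζ2, hζ3, hζ4, hζ5⟩ hδpos' hxlt.le
          simp only [heF]
          rw [hd, hqeq, Wpot]
          exact energy_mid hε0.ne' _
        rw [hcong]
        exact middle_integral hε0.ne' (by linarith : (0:ℝ) ≤ δ/2)
      have htotal : (∫ t in (-δ)..δ, eF t) ≤ cZero + 114*ε*δ := by
        linarith [a1, a2, hside1, hside3, hmid]
      have hf_le : (∫ t in (-δ)..δ, eF t * (t + β ε)) ≤ (β ε + δ) * ∫ t in (-δ)..δ, eF t := by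
        have h1 : (∫ t in (-δ)..δ, eF t * (t + β ε)) ≤ ∫ t in (-δ)..δ, (β ε + δ) * eF t := by
          apply intervalIntegral.integral_mono_on habδ hint (he_int.const_mul _)
          intro x hx
          have h2 : x + β ε ≤ β ε + δ := by linarith [hx.2]
          calc eF x * (x + β ε) ≤ eF x * (β ε + δ) :=
                mul_le_mul_of_nonneg_left h2 (heNonneg x)
            _ = (β ε + δ) * eF x := by ring
        rw [intervalIntegral.integral_const_mul] at h1
        exact h1
      have hIpos : 0 ≤ ∫ t in (-δ)..δ, eF t * (t + β ε) :=
        intervalIntegral.integral_nonneg habδ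
          (fun x hx => mul_nonneg (heNonneg x) (by have := hx.1; linarith))
      constructor
      · exact mul_nonneg (one_div_nonneg.2 hβ.le) hIpos
      · have hc0 : 0 ≤ cZero + 114*ε*δ := by nlinarith [mul_nonneg hε0.le hδpos.le]
        calc (1/β ε) * ∫ t in (-δ)..δ, eF t * (t + β ε)
            ≤ (1/β ε) * ((β ε + δ) * (cZero + 114*ε*δ)) := by
              exact mul_le_mul_of_nonneg_left
                (le_trans hf_le (mul_le_mul_of_nonneg_left htotal (by linarith)))
                (one_div_nonneg.2 hβ.le)
          _ = (1 + δ/β ε) * (cZero + 114*ε*δ) := by field_simp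
          _ = g ε := by
              simp only [hgdef]
              rw [← hδdef, deltaE]
              have hbne : β ε ≠ 0 := hβ.ne'
              field_simp
  refine le_trans (Filter.limsup_le_limsup (hbound.mono fun ε h => h.2) ?_
    hg.isBoundedUnder_le) hg.limsup_eq.le
  exact isCoboundedUnder_le_of_eventually_le _ (hbound.mono fun ε h => h.1)
end

section
/- For every β > 0, ∫₀^L ( 1/β + β·‖γ''(t)‖² ) dt ≥ 4π; in particular ∫₀^L ( 1 + ‖γ''(t)‖² ) dt ≥ 4π. Moreover, ∫₀^L ‖γ''(t)‖² dt ≥ 4π²/L. -/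
/-!
Write the unit tangent `γ'` as `exp (i θ)` with a continuous angle `θ`, so that `|θ'| = ‖γ''‖` and
`∫ ‖γ''‖` bounds the total variation of `θ`. Since `γ' (0) = γ' (L)`, either `θ` winds at least
once, or `θ (0) = θ (L)` and `θ` has oscillation at least `π`, because `∫ exp (i θ) = γ (L) - γ (0)`
vanishes and so `exp (i θ)` cannot stay in an open half-plane. Either way `∫ ‖γ''‖ ≥ 2π`;
the three inequalities follow from `2 ‖γ''‖ ≤ 1/β + β ‖γ''‖²` and Cauchy–Schwarz.
-/

open MeasureTheory Filter Set Topology intervalIntegral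

open Complex
open scoped ComplexConjugate RealInnerProductSpace Real

theorem inner_eq_zero_of_hasDerivWithinAt_of_norm_eq_one {F : Type*} [NormedAddCommGroup F]
    [InnerProductSpace ℝ F] {u : ℝ → F} {u' : F} {s : Set ℝ} {t : ℝ}
    (hs : UniqueDiffWithinAt ℝ s t) (ht : t ∈ s) (hu : HasDerivWithinAt u u' s t)
    (hnorm : ∀ x ∈ s, ‖u x‖ = 1) : ⟪u t, u'⟫ = 0 := by
  have hconst : HasDerivWithinAt (fun x => ‖u x‖ ^ 2) 0 s t :=
    (hasDerivWithinAt_const t s 1).congr (fun x hx => by simp [hnorm x hx]) (by simp [hnorm t ht])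
  linarith [hs.eq_deriv s hu.norm_sq hconst]

theorem Complex.eq_mul_im_mul_I_of_inner_eq_zero {z w : ℂ} (hz : ‖z‖ = 1) (h : ⟪z, w⟫ = 0) :
    w = z * ((conj z * w).im * I) := by
  have hre : conj z * w = (conj z * w).im * I := by
    rw [Complex.inner, mul_re, conj_re, conj_im] at h
    apply Complex.ext
    · simp only [mul_re, conj_re, conj_im, I_re, I_im, ofReal_re, ofReal_im]
      linarith
    · simp
  rw [← hre, ← mul_assoc, mul_conj, normSq_eq_norm_sq, hz]
  simp

theorem two_pi_le_abs_sub_of_exp_mul_I_eq {x y : ℝ} (h : exp (x * I) = exp (y * I))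
    (hxy : x ≠ y) : 2 * π ≤ |x - y| := by
  obtain ⟨n, hn⟩ := exp_eq_exp_iff_exists_int.1 h
  have hsub : x - y = n * (2 * π) := by
    have him : x = y + n * (2 * π) := by simpa using congrArg im hn
    linarith
  have hn0 : n ≠ 0 := by
    rintro rfl
    exact hxy (by simpa [sub_eq_zero] using hsub)
  rw [hsub, abs_mul, abs_of_pos Real.two_pi_pos, ← Int.cast_abs]
  exact le_mul_of_one_le_left Real.two_pi_pos.le (by exact_mod_cast Int.one_le_abs hn0)

theorem two_mul_abs_sub_le_of_abs_sub_le {θ F : ℝ → ℝ} {a b : ℝ}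
    (hθF : ∀ x ∈ Icc a b, ∀ y ∈ Icc a b, x ≤ y → |θ y - θ x| ≤ F y - F x)
    (hθ : θ a = θ b) {s t : ℝ} (hs : s ∈ Icc a b) (ht : t ∈ Icc a b) :
    2 * |θ s - θ t| ≤ F b - F a := by
  wlog hst : s ≤ t generalizing s t
  · rw [abs_sub_comm]
    exact this ht hs (le_of_not_ge hst)
  have ha : a ∈ Icc a b := left_mem_Icc.2 (hs.1.trans hs.2)
  have hb : b ∈ Icc a b := right_mem_Icc.2 (hs.1.trans hs.2)
  have h₁ := hθF a ha s hs hs.1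
  have h₂ := hθF s hs t ht hst
  have h₃ := hθF t ht b hb ht.2
  rw [abs_le] at h₁ h₂ h₃
  cases abs_cases (θ s - θ t) <;> linarith

theorem exists_pi_le_sub_of_integral_exp_mul_I_eq_zero {θ : ℝ → ℝ} {a b : ℝ} (hab : a < b)
    (hθ : ContinuousOn θ (Icc a b)) (hmean : ∫ t in a..b, exp (θ t * I) = 0) :
    ∃ s ∈ Icc a b, ∃ t ∈ Icc a b, π ≤ θ s - θ t := by
  obtain ⟨s, hs, hmax⟩ := isCompact_Icc.exists_isMaxOn (nonempty_Icc.2 hab.le) hθ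
  obtain ⟨t, ht, hmin⟩ := isCompact_Icc.exists_isMinOn (nonempty_Icc.2 hab.le) hθ
  refine ⟨s, hs, t, ht, not_lt.1 fun hlt => ?_⟩
  set m := (θ s + θ t) / 2 with hm
  -- `cos (θ - m)` is positive on `[a, b]`, yet its integral is `Re (exp (-m i) ∫ exp (θ i)) = 0`.
  have hpos : 0 < ∫ x in a..b, Real.cos (θ x - m) := by
    refine intervalIntegral_pos_of_pos_on ?_ (fun x hx => Real.cos_pos_of_mem_Ioo ⟨?_, ?_⟩) hab
    · exact (Real.continuous_cos.comp_continuousOn (hθ.sub continuousOn_const))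
        |>.intervalIntegrable_of_Icc hab.le
    · linarith [isMinOn_iff.1 hmin x (Ioo_subset_Icc_self hx)]
    · linarith [isMaxOn_iff.1 hmax x (Ioo_subset_Icc_self hx)]
  have hzero : ∫ x in a..b, Real.cos (θ x - m) = 0 := by
    have hrot (x : ℝ) : Real.cos (θ x - m) = (exp (-(m * I)) * exp (θ x * I)).re := by
      rw [← exp_add, ← exp_ofReal_mul_I_re]
      congr 2
      push_cast
      ring
    have hint : IntervalIntegrable (fun x => exp (θ x * I)) volume a b :=
      (continuous_exp.comp_continuousOn
        ((continuous_ofReal.comp_continuousOn hθ).mul continuousOn_const)).intervalIntegrable_of_Icc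
          hab.le
    simp_rw [hrot]
    have := intervalIntegral_re (hint.const_mul (exp (-(m * I))))
    simp only [RCLike.re_to_complex] at this
    rw [this, intervalIntegral.integral_const_mul, hmean, mul_zero, zero_re]
  linarith

theorem exists_angle_lift {a b : ℝ} (hab : a < b) {u u' : ℝ → ℂ}
    (hu : ∀ t ∈ Icc a b, HasDerivWithinAt u (u' t) (Icc a b) t)
    (hu' : ContinuousOn u' (Icc a b)) (hnorm : ∀ t ∈ Icc a b, ‖u t‖ = 1) :
    ∃ θ : ℝ → ℝ, Continuous θ ∧ (∀ t ∈ Icc a b, u t = exp (θ t * I)) ∧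
      ∀ x ∈ Icc a b, ∀ y ∈ Icc a b, x ≤ y → |θ y - θ x| ≤ ∫ t in x..y, ‖u' t‖ := by
  set k : ℝ → ℝ := fun t => (conj (u t) * u' t).im
  have hu_cont : ContinuousOn u (Icc a b) := fun t ht => (hu t ht).continuousWithinAt
  have hk : ContinuousOn k (Icc a b) :=
    continuous_im.comp_continuousOn ((continuous_conj.comp_continuousOn hu_cont).mul hu')
  have hu'_eq : ∀ t ∈ Icc a b, u' t = u t * (k t * I) := fun t ht =>
    eq_mul_im_mul_I_of_inner_eq_zero (hnorm t ht) <|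
      inner_eq_zero_of_hasDerivWithinAt_of_norm_eq_one (uniqueDiffOn_Icc hab t ht) ht (hu t ht)
        hnorm
  have hk_le : ∀ t ∈ Icc a b, |k t| ≤ ‖u' t‖ := fun t ht => by
    simpa only [norm_mul, norm_conj, hnorm t ht, one_mul] using abs_im_le_norm (conj (u t) * u' t)
  set κ : ℝ → ℝ := IccExtend hab.le ((Icc a b).domRestrict k)
  have hκ : Continuous κ := hk.domRestrict.Icc_extend'
  have hκk : ∀ t ∈ Icc a b, κ t = k t := fun t ht => IccExtend_of_mem _ _ ht
  set θ : ℝ → ℝ := fun t => arg (u a) + ∫ s in a..t, κ s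
  have hθ : ∀ t, HasDerivAt θ (κ t) t := fun t =>
    ((hκ.integral_hasStrictDerivAt a t).hasDerivAt).const_add _
  have hθc : Continuous θ := continuous_iff_continuousAt.2 fun t => (hθ t).continuousAt
  -- `u · exp (-θ i)` has zero derivative since `u' = u · k i` and `θ' = k`.
  have hconst : ∀ t ∈ Icc a b, u t * exp (-(θ t * I)) = u a * exp (-(θ a * I)) := by
    refine constant_of_has_deriv_right_zero ?_ fun t ht => ?_
    · exact hu_cont.mul (by fun_prop)
    · have hd := (hu t (Ico_subset_Icc_self ht)).mul
        ((hθ t).ofReal_comp.mul_const I).neg.cexp.hasDerivWithinAt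
      refine (hd.mono_of_mem_nhdsWithin (Icc_mem_nhdsGE_of_mem ht)).congr_deriv ?_
      rw [hu'_eq t (Ico_subset_Icc_self ht), hκk t (Ico_subset_Icc_self ht)]
      ring
  refine ⟨θ, hθc, fun t ht => ?_, fun x hx y hy hxy => ?_⟩
  · have hua : u a * exp (-(θ a * I)) = 1 := by
      nth_rw 1 [← norm_mul_exp_arg_mul_I (u a)]
      simp [θ, hnorm a (left_mem_Icc.2 hab.le), ← exp_add]
    rw [← mul_inv_eq_one₀ (exp_ne_zero _), ← exp_neg, hconst t ht, hua]
  · have hsub : Icc x y ⊆ Icc a b := Icc_subset_Icc hx.1 hy.2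
    have hθκ : θ y - θ x = ∫ t in x..y, κ t := by
      rw [add_sub_add_left_eq_sub,
        integral_interval_sub_left (hκ.intervalIntegrable _ _) (hκ.intervalIntegrable _ _)]
    calc |θ y - θ x| = |∫ t in x..y, κ t| := by rw [hθκ]
      _ ≤ ∫ t in x..y, |κ t| := abs_integral_le_integral_abs hxy
      _ ≤ ∫ t in x..y, ‖u' t‖ :=
        integral_mono_on hxy (hκ.abs.intervalIntegrable _ _)
          ((hu'.mono hsub).norm.intervalIntegrable_of_Icc hxy) fun t ht => by
            rw [hκk t (hsub ht)]
            exact hk_le t (hsub ht)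

theorem two_pi_le_integral_norm_deriv_of_integral_eq_zero {a b : ℝ} (hab : a < b) {u u' : ℝ → ℂ}
    (hu : ∀ t ∈ Icc a b, HasDerivWithinAt u (u' t) (Icc a b) t)
    (hu' : ContinuousOn u' (Icc a b)) (hnorm : ∀ t ∈ Icc a b, ‖u t‖ = 1) (hper : u a = u b)
    (hmean : ∫ t in a..b, u t = 0) :
    2 * π ≤ ∫ t in a..b, ‖u' t‖ := by
  obtain ⟨θ, hθc, hθu, hθvar⟩ := exists_angle_lift hab hu hu' hnorm
  have ha : a ∈ Icc a b := left_mem_Icc.2 hab.le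
  have hb : b ∈ Icc a b := right_mem_Icc.2 hab.le
  by_cases hθ : θ a = θ b
  · have hθmean : ∫ t in a..b, exp (θ t * I) = 0 := by
      rw [← hmean]
      refine integral_congr fun t ht => (hθu t ?_).symm
      rwa [uIcc_of_le hab.le] at ht
    obtain ⟨s, hs, t, ht, hst⟩ :=
      exists_pi_le_sub_of_integral_exp_mul_I_eq_zero hab hθc.continuousOn hθmean
    have hint : ∀ y ∈ Icc a b, IntervalIntegrable (fun t => ‖u' t‖) volume a y := fun y hy =>
      (hu'.norm.mono (Icc_subset_Icc le_rfl hy.2)).intervalIntegrable_of_Icc hy.1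
    have hvar := two_mul_abs_sub_le_of_abs_sub_le (F := fun y => ∫ t in a..y, ‖u' t‖)
      (fun x hx y hy hxy => by
        rw [integral_interval_sub_left (hint y hy) (hint x hx)]
        exact hθvar x hx y hy hxy) hθ hs ht
    simp only [integral_same, sub_zero] at hvar
    linarith [le_abs_self (θ s - θ t)]
  · calc 2 * π ≤ |θ b - θ a| :=
        two_pi_le_abs_sub_of_exp_mul_I_eq (by rw [← hθu b hb, ← hθu a ha, hper]) (Ne.symm hθ)
      _ ≤ ∫ t in a..b, ‖u' t‖ := hθvar a ha b hb hab.le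

theorem two_pi_le_integral_norm_derivWithin {a b : ℝ} (hab : a < b)
    {v : ℝ → EuclideanSpace ℝ (Fin 2)} (hv : ContDiffOn ℝ 1 v (Icc a b))
    (hnorm : ∀ t ∈ Icc a b, ‖v t‖ = 1) (hper : v a = v b) (hmean : ∫ t in a..b, v t = 0) :
    2 * π ≤ ∫ t in a..b, ‖derivWithin v (Icc a b) t‖ := by
  let e := Complex.orthonormalBasisOneI.repr.symm
  simpa using two_pi_le_integral_norm_deriv_of_integral_eq_zero hab (u := fun t => e (v t))
    (u' := fun t => e (derivWithin v (Icc a b) t))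
    (fun t ht => e.toContinuousLinearEquiv.hasFDerivAt.comp_hasDerivWithinAt t
      (hv.differentiableOn one_ne_zero t ht).hasDerivWithinAt)
    (e.continuous.comp_continuousOn (hv.continuousOn_derivWithin (uniqueDiffOn_Icc hab) le_rfl))
    (by simpa using hnorm) (by simp [hper])
    ((e.toLinearIsometry.intervalIntegral_comp_comm v).trans (by simp [hmean]))

theorem integral_derivWithin_Icc_eq_sub {E : Type*} [NormedAddCommGroup E] [NormedSpace ℝ E]
    [CompleteSpace E] {a b : ℝ} (hab : a < b) {γ : ℝ → E} (hγ : ContDiffOn ℝ 1 γ (Icc a b)) :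
    ∫ t in a..b, derivWithin γ (Icc a b) t = γ b - γ a :=
  integral_eq_sub_of_hasDeriv_right_of_le hab.le hγ.continuousOn
    (fun x hx => (hγ.differentiableOn one_ne_zero x (Ioo_subset_Icc_self hx)).hasDerivWithinAt
      |>.mono_of_mem_nhdsWithin (Icc_mem_nhdsGT_of_mem (Ioo_subset_Ico_self hx)))
    ((hγ.continuousOn_derivWithin (uniqueDiffOn_Icc hab) le_rfl).intervalIntegrable_of_Icc hab.le)

theorem sq_integral_le_mul_integral_sq {f : ℝ → ℝ} {a b : ℝ} (hab : a < b)
    (hf : IntervalIntegrable f volume a b)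
    (hf2 : IntervalIntegrable (fun t => f t ^ 2) volume a b) :
    (∫ t in a..b, f t) ^ 2 ≤ (b - a) * ∫ t in a..b, f t ^ 2 := by
  set c := (∫ t in a..b, f t) / (b - a) with hc
  have h : ∫ t in a..b, (2 * c * f t - c ^ 2) ≤ ∫ t in a..b, f t ^ 2 :=
    integral_mono_on hab.le ((hf.const_mul (2 * c)).sub intervalIntegrable_const) hf2
      fun t _ => by nlinarith [sq_nonneg (f t - c)]
  rw [integral_sub (hf.const_mul _) intervalIntegrable_const, intervalIntegral.integral_const_mul,
    intervalIntegral.integral_const, smul_eq_mul] at h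
  have hba : 0 < b - a := sub_pos.2 hab
  rw [hc] at h
  field_simp at h
  nlinarith

/-- Inequalities (4.2)–(4.3): for a closed `C²` curve `γ : [0,L] → ℝ²` parametrized by
arclength, `∫₀^L (1/β + β‖γ''‖²) dt ≥ 4π` for every `β > 0`; in particular
`∫₀^L (1 + ‖γ''‖²) dt ≥ 4π`; moreover `∫₀^L ‖γ''‖² dt ≥ 4π²/L`. -/
theorem stmt13 (L : ℝ) (hL : 0 < L) (γ : ℝ → EuclideanSpace ℝ (Fin 2))
    (hsmooth : ContDiffOn ℝ 2 γ (Set.Icc 0 L))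
    (harc : ∀ t ∈ Set.Icc (0:ℝ) L, ‖derivWithin γ (Set.Icc 0 L) t‖ = 1)
    (hclosed : γ 0 = γ L)
    (hclosed' : derivWithin γ (Set.Icc 0 L) 0 = derivWithin γ (Set.Icc 0 L) L) :
    (∀ β : ℝ, 0 < β →
      4 * Real.pi ≤ ∫ t in (0:ℝ)..L,
        (1 / β + β * ‖derivWithin (derivWithin γ (Set.Icc 0 L)) (Set.Icc 0 L) t‖ ^ 2)) ∧
    (4 * Real.pi ≤ ∫ t in (0:ℝ)..L,
        (1 + ‖derivWithin (derivWithin γ (Set.Icc 0 L)) (Set.Icc 0 L) t‖ ^ 2)) ∧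
    (4 * Real.pi ^ 2 / L ≤ ∫ t in (0:ℝ)..L,
        ‖derivWithin (derivWithin γ (Set.Icc 0 L)) (Set.Icc 0 L) t‖ ^ 2) := by
  have hv : ContDiffOn ℝ 1 (derivWithin γ (Icc 0 L)) (Icc 0 L) :=
    hsmooth.derivWithin (uniqueDiffOn_Icc hL) (by norm_num)
  have hmean : ∫ t in (0:ℝ)..L, derivWithin γ (Icc 0 L) t = 0 := by
    rw [integral_derivWithin_Icc_eq_sub hL (hsmooth.of_le one_le_two), hclosed, sub_self]
  set κ := fun t => ‖derivWithin (derivWithin γ (Icc 0 L)) (Icc 0 L) t‖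
  have hκ : 2 * π ≤ ∫ t in (0:ℝ)..L, κ t :=
    two_pi_le_integral_norm_derivWithin hL hv harc hclosed' hmean
  have hκ_cont : ContinuousOn κ (Icc 0 L) :=
    (hv.continuousOn_derivWithin (uniqueDiffOn_Icc hL) le_rfl).norm
  have hκ_int : IntervalIntegrable κ volume 0 L := hκ_cont.intervalIntegrable_of_Icc hL.le
  have hκ2_int : IntervalIntegrable (fun t => κ t ^ 2) volume 0 L :=
    (hκ_cont.pow 2).intervalIntegrable_of_Icc hL.le
  have hβ : ∀ β : ℝ, 0 < β → 4 * π ≤ ∫ t in (0:ℝ)..L, (1 / β + β * κ t ^ 2) := fun β hβ =>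
    calc 4 * π ≤ ∫ t in (0:ℝ)..L, 2 * κ t := by rw [intervalIntegral.integral_const_mul]; linarith
      _ ≤ ∫ t in (0:ℝ)..L, (1 / β + β * κ t ^ 2) :=
        integral_mono_on hL.le (hκ_int.const_mul 2)
          (intervalIntegrable_const.add (hκ2_int.const_mul β)) fun t _ => by
            nlinarith [sq_nonneg (β * κ t - 1), mul_one_div_cancel hβ.ne']
  refine ⟨hβ, by simpa using hβ 1 one_pos, ?_⟩
  have hCS := sq_integral_le_mul_integral_sq hL hκ_int hκ2_int
  rw [sub_zero] at hCS
  rw [div_le_iff₀ hL]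
  nlinarith [pow_le_pow_left₀ (by positivity) hκ 2]
end
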